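/- arXiv:2009.06000 — 7 statements merged into one kernel-verified Lean document; each statement's English description precedes it below -/
import Mathlib

section
/- Let A be an F×K array with entries from {*} ∪ [S], where each ordinary symbol s ∈ [S] appears at least once, and suppose that whenever two distinct entries a_{i,j} = a_{i',j'} = s for an ordinary symbol s, we have i ≠ i', j ≠ j', and a_{i,j'} = a_{i',j} = *. If n denotes the total number of ordinary-symbol entries of A, then S ≥ nF/(KF + F − n). -/
/-!
Let `g s` be the number of occurrences of the symbol `s` and `r i` the number of ordinary entries
of row `i`. The columns of the occurrences of `s` are pairwise distinct, and apart from the column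
of an occurrence in row `i` each of them carries a star in row `i`; hence `g s ≤ z i + 1`, where
`z i = K - r i` counts the stars of row `i`. Summing this over all ordinary entries gives
`∑ g s ^ 2 + ∑ r i ^ 2 ≤ (K + 1) n`, and Cauchy–Schwarz for both sums, `n ^ 2 ≤ S ∑ g s ^ 2` and
`n ^ 2 ≤ F ∑ r i ^ 2`, turns this into `n (F + S) ≤ (K + 1) F S`.
-/

open Finset

namespace SymbolArray

variable {ι κ α : Type*} [Fintype κ]

/-- Condition C3 of a placement delivery array, with `none` as the star. -/
def CornerCondition (A : ι → κ → Option α) : Prop :=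
  ∀ (i i' : ι) (j j' : κ) (s : α), A i j = some s → A i' j' = some s → (i, j) ≠ (i', j') →
    i ≠ i' ∧ j ≠ j' ∧ A i j' = none ∧ A i' j = none

variable (A : ι → κ → Option α)

def rowOrdinary (i : ι) : Finset κ := {j | A i j ≠ none}

def rowStars (i : ι) : Finset κ := {j | A i j = none}

lemma card_rowOrdinary_add_card_rowStars (i : ι) :
    #(rowOrdinary A i) + #(rowStars A i) = Fintype.card κ := by
  rw [rowOrdinary, rowStars, add_comm]
  exact card_filter_add_card_filter_not _

variable [Fintype ι]

def ordinaryCells : Finset (ι × κ) := {p | A p.1 p.2 ≠ none}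

lemma sum_ordinaryCells {M : Type*} [AddCommMonoid M] (f : ι × κ → M) :
    ∑ p ∈ ordinaryCells A, f p = ∑ i, ∑ j ∈ rowOrdinary A i, f (i, j) := by
  simp only [ordinaryCells, rowOrdinary, sum_filter, Fintype.sum_prod_type]

lemma card_ordinaryCells_eq_sum_card_rowOrdinary :
    #(ordinaryCells A) = ∑ i, #(rowOrdinary A i) := by
  simpa only [card_eq_sum_ones] using sum_ordinaryCells A (fun _ => 1)

variable [DecidableEq α]

def occurrences (s : α) : Finset (ι × κ) := {p | A p.1 p.2 = some s}

variable {A} in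
lemma card_occurrences_le (hA : CornerCondition A) {i : ι} {j : κ} {s : α}
    (hs : A i j = some s) : #(occurrences A s) ≤ #(rowStars A i) + 1 := by
  classical
  calc #(occurrences A s) ≤ #(insert j (rowStars A i)) := by
        refine card_le_card_of_injOn Prod.snd (fun q hq => ?_) (fun q hq q' hq' hqq' => ?_)
        · simp only [occurrences, mem_coe, mem_filter, mem_univ, true_and] at hq
          by_cases hqij : (i, j) = q
          · simp [← hqij]
          · simp [rowStars, (hA i q.1 j q.2 s hs hq hqij).2.2.1]
        · simp only [occurrences, mem_coe, mem_filter, mem_univ, true_and] at hq hq'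
          by_contra hne
          exact (hA q.1 q'.1 q.2 q'.2 s hq hq' hne).2.1 hqq'
    _ ≤ #(rowStars A i) + 1 := card_insert_le _ _

variable [Fintype α]

lemma sum_occurrences {M : Type*} [AddCommMonoid M] (f : ι × κ → M) :
    ∑ s, ∑ p ∈ occurrences A s, f p = ∑ p ∈ ordinaryCells A, f p := by
  simp only [occurrences, ordinaryCells, sum_filter]
  rw [sum_comm]
  refine sum_congr rfl fun p _ => ?_
  cases A p.1 p.2 <;> simp

lemma card_ordinaryCells_eq_sum_card_occurrences :
    #(ordinaryCells A) = ∑ s, #(occurrences A s) := by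
  simpa only [card_eq_sum_ones] using (sum_occurrences A (fun _ => 1)).symm

variable {A}

lemma sum_card_occurrences_sq_add_sum_card_rowOrdinary_sq_le (hA : CornerCondition A) :
    ∑ s, #(occurrences A s) ^ 2 + ∑ i, #(rowOrdinary A i) ^ 2 ≤
      (Fintype.card κ + 1) * #(ordinaryCells A) := by
  have hsq : ∑ s, #(occurrences A s) ^ 2 ≤ ∑ i, #(rowOrdinary A i) * (#(rowStars A i) + 1) :=
    calc ∑ s, #(occurrences A s) ^ 2 = ∑ s, ∑ _p ∈ occurrences A s, #(occurrences A s) := by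
          simp [sq]
      _ ≤ ∑ s, ∑ p ∈ occurrences A s, (#(rowStars A p.1) + 1) :=
          sum_le_sum fun s _ => sum_le_sum fun p hp =>
            card_occurrences_le hA (by simpa [occurrences] using hp)
      _ = ∑ i, #(rowOrdinary A i) * (#(rowStars A i) + 1) := by
          simp [sum_occurrences, sum_ordinaryCells]
  calc _ ≤ ∑ i, (#(rowOrdinary A i) * (#(rowStars A i) + 1) + #(rowOrdinary A i) ^ 2) := by
        rw [sum_add_distrib]; gcongr
    _ = ∑ i, (Fintype.card κ + 1) * #(rowOrdinary A i) := by
        refine sum_congr rfl fun i _ => ?_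
        rw [← card_rowOrdinary_add_card_rowStars A i]; ring
    _ = (Fintype.card κ + 1) * #(ordinaryCells A) := by
        rw [← mul_sum, card_ordinaryCells_eq_sum_card_rowOrdinary]

theorem card_ordinaryCells_mul_le (hA : CornerCondition A) :
    #(ordinaryCells A) * (Fintype.card ι + Fintype.card α) ≤
      (Fintype.card κ + 1) * Fintype.card ι * Fintype.card α := by
  set n := #(ordinaryCells A)
  have hS : n ^ 2 ≤ Fintype.card α * ∑ s, #(occurrences A s) ^ 2 := by
    simpa [n, card_ordinaryCells_eq_sum_card_occurrences] using
      sq_sum_le_card_mul_sum_sq (s := univ) (f := fun s => #(occurrences A s))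
  have hF : n ^ 2 ≤ Fintype.card ι * ∑ i, #(rowOrdinary A i) ^ 2 := by
    simpa [n, card_ordinaryCells_eq_sum_card_rowOrdinary] using
      sq_sum_le_card_mul_sum_sq (s := univ) (f := fun i => #(rowOrdinary A i))
  have hsum := sum_card_occurrences_sq_add_sum_card_rowOrdinary_sq_le hA
  rcases Nat.eq_zero_or_pos n with hn | hn
  · simp [hn]
  refine Nat.le_of_mul_le_mul_left ?_ hn
  calc n * (n * (Fintype.card ι + Fintype.card α))
      = Fintype.card ι * n ^ 2 + Fintype.card α * n ^ 2 := by ring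
    _ ≤ Fintype.card ι * (Fintype.card α * ∑ s, #(occurrences A s) ^ 2) +
        Fintype.card α * (Fintype.card ι * ∑ i, #(rowOrdinary A i) ^ 2) := by gcongr
    _ = Fintype.card ι * Fintype.card α *
        (∑ s, #(occurrences A s) ^ 2 + ∑ i, #(rowOrdinary A i) ^ 2) := by ring
    _ ≤ Fintype.card ι * Fintype.card α * ((Fintype.card κ + 1) * n) := by gcongr
    _ = n * ((Fintype.card κ + 1) * Fintype.card ι * Fintype.card α) := by ring

end SymbolArray

theorem stmt0_general (K F S : ℕ)
    (A : Fin F → Fin K → Option (Fin S))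
    (hprop : ∀ (i i' : Fin F) (j j' : Fin K) (s : Fin S),
      A i j = some s → A i' j' = some s → (i, j) ≠ (i', j') →
      i ≠ i' ∧ j ≠ j' ∧ A i j' = none ∧ A i' j = none)
    (n : ℕ)
    (hn : n = (Finset.univ.filter
      (fun p : Fin F × Fin K => A p.1 p.2 ≠ none)).card) :
    (n : ℚ) * F / ((K : ℚ) * F + F - n) ≤ S := by
  have key : (n : ℚ) * (F + S) ≤ (K + 1) * F * S := by
    have := SymbolArray.card_ordinaryCells_mul_le (A := A) hprop
    simp only [Fintype.card_fin] at this
    rw [hn]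
    exact_mod_cast this
  rcases le_or_gt ((K : ℚ) * F + F - n) 0 with hD | hD
  · exact (div_nonpos_of_nonneg_of_nonpos (by positivity) hD).trans (Nat.cast_nonneg S)
  · rw [div_le_iff₀ hD]
    linarith

/-- counting lower bound on the number of ordinary symbols of a
PDA-like array (Lemma 3 of Cheng et al.).  Entries are `Option (Fin S)` where
`none` plays the role of the star symbol `*` and `some s` is the ordinary
symbol `s`. -/
theorem stmt0 (K F S : ℕ) (hK : 1 ≤ K) (hF : 1 ≤ F) (hS : 1 ≤ S)
    (A : Fin F → Fin K → Option (Fin S))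
    (hsurj : ∀ s : Fin S, ∃ i j, A i j = some s)
    (hprop : ∀ (i i' : Fin F) (j j' : Fin K) (s : Fin S),
      A i j = some s → A i' j' = some s → (i, j) ≠ (i', j') →
      i ≠ i' ∧ j ≠ j' ∧ A i j' = none ∧ A i' j = none)
    (n : ℕ)
    (hn : n = (Finset.univ.filter
      (fun p : Fin F × Fin K => A p.1 p.2 ≠ none)).card)
    (hnKF : n ≤ K * F) :
    (n : ℚ) * F / ((K : ℚ) * F + F - n) ≤ S :=
  stmt0_general K F S A hprop n hn
end

section
/- Let K ≥ g ≥ 2 be integers and let A be an F×K array over {*} ∪ [S] such that: (1) each row has exactly g−1 stars; (2) each ordinary symbol occurs exactly g times; (3) any two distinct equal ordinary entries a_{i,j} = a_{i',j'} = s satisfy i ≠ i', j ≠ j', and a_{i,j'} = a_{i',j} = *. Then F ≥ C(K, g−1). -/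
/-!
In the row `i` of such an array, a symbol `s` at column `j` occupies exactly the columns
`{j} ∪ starCols i`: the cross property puts every other occurrence of `s` in a star column of
row `i`, and there are `g` occurrences in distinct columns against `g` such columns. Hence if
`j ∈ starCols i` and `A i j' = s`, the occurrence of `s` in column `j` lies in a row `i'` with
`starCols i' = starCols i - j + j'`. The family of star sets is thus closed under exchanging one
element, so it contains every `(g - 1)`-subset of the columns, and there are at most `F` rows.
-/

open Finset

namespace Finset

variable {α : Type*} [DecidableEq α]

def ExchangeClosed (𝒜 : Set (Finset α)) : Prop :=
  ∀ B ∈ 𝒜, ∀ j ∈ B, ∀ j' ∉ B, insert j' (B.erase j) ∈ 𝒜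

theorem ExchangeClosed.mem_of_card_eq {𝒜 : Set (Finset α)} (h𝒜 : ExchangeClosed 𝒜)
    {B C : Finset α} (hB : B ∈ 𝒜) (hC : #C = #B) : C ∈ 𝒜 := by
  induction hn : #(C \ B) generalizing B with
  | zero =>
    have hCB : C ⊆ B := sdiff_eq_empty_iff_subset.1 (card_eq_zero.1 hn)
    rwa [eq_of_subset_of_card_le hCB hC.ge]
  | succ n ih =>
    obtain ⟨j', hj'⟩ : (C \ B).Nonempty := card_pos.1 (by omega)
    obtain ⟨j, hj⟩ : (B \ C).Nonempty := card_pos.1 (by rw [← card_sdiff_comm hC]; omega)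
    rw [mem_sdiff] at hj hj'
    refine ih (h𝒜 B hB j hj.1 j' hj'.2) ?_ ?_
    · rw [card_insert_of_notMem (by simp [hj'.2]), card_erase_of_mem hj.1, hC]
      have := card_pos.2 ⟨j, hj.1⟩
      omega
    · have : C \ insert j' (B.erase j) = (C \ B).erase j' := by
        ext x
        simp only [mem_sdiff, mem_insert, mem_erase]
        grind
      rw [this, card_erase_of_mem (mem_sdiff.2 hj'), hn, Nat.add_sub_cancel]

end Finset

namespace PlacementDeliveryArray

variable {ι κ σ : Type*} [Fintype ι] [Fintype κ] [DecidableEq κ] [DecidableEq σ]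
  (A : ι → κ → Option σ)

def starCols (i : ι) : Finset κ := univ.filter (fun j => A i j = none)

def cells (s : σ) : Finset (ι × κ) := univ.filter (fun p => A p.1 p.2 = some s)

def CrossProperty : Prop :=
  ∀ (i i' : ι) (j j' : κ) (s : σ), A i j = some s → A i' j' = some s →
    (i, j) ≠ (i', j') → i ≠ i' ∧ j ≠ j' ∧ A i j' = none ∧ A i' j = none

variable {A}

theorem card_image_snd_cells (hA : CrossProperty A) (s : σ) :
    #((cells A s).image Prod.snd) = #(cells A s) := by
  refine card_image_of_injOn fun p hp q hq hpq => ?_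
  by_contra hne
  simp only [cells, coe_filter, mem_univ, true_and, Set.mem_ofPred_eq] at hp hq
  exact (hA p.1 q.1 p.2 q.2 s hp hq hne).2.1 hpq

section

variable {g : ℕ} (hrow : ∀ i, #(starCols A i) = g - 1) (hocc : ∀ s, #(cells A s) = g)
  (hA : CrossProperty A)
include hrow hocc hA

-- `⊆` is the cross property; equality follows by counting.
theorem image_snd_cells_eq_insert_starCols {i : ι} {j : κ} {s : σ} (h : A i j = some s) :
    (cells A s).image Prod.snd = insert j (starCols A i) := by
  have hsub : (cells A s).image Prod.snd ⊆ insert j (starCols A i) := by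
    simp only [subset_iff, mem_image, cells, mem_filter, mem_univ, true_and, mem_insert,
      starCols]
    rintro _ ⟨⟨i', j'⟩, h', rfl⟩
    by_cases hij : (i, j) = (i', j')
    · simp_all
    · exact Or.inr (hA i i' j j' s h h' hij).2.2.1
  have hg : 0 < g := hocc s ▸ card_pos.2 ⟨(i, j), by simp [cells, h]⟩
  refine eq_of_subset_of_card_le hsub ?_
  rw [card_image_snd_cells hA, hocc, card_insert_of_notMem (by simp [starCols, h]), hrow]
  omega

theorem exchangeClosed_range_starCols : ExchangeClosed (Set.range (starCols A)) := by
  rintro _ ⟨i, rfl⟩ j hj j' hj'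
  obtain ⟨s, hs⟩ : ∃ s, A i j' = some s :=
    Option.ne_none_iff_exists'.1 (by simpa [starCols] using hj')
  have hcols := image_snd_cells_eq_insert_starCols hrow hocc hA hs
  obtain ⟨i', hi's⟩ : ∃ i', A i' j = some s := by
    obtain ⟨⟨i', _⟩, h, rfl⟩ := mem_image.1 (hcols ▸ mem_insert_of_mem hj)
    exact ⟨i', by simpa [cells] using h⟩
  refine ⟨i', ?_⟩
  rw [← erase_insert (by simp [starCols, hi's] : j ∉ starCols A i'),
    ← image_snd_cells_eq_insert_starCols hrow hocc hA hi's, hcols,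
    erase_insert_of_ne (by rintro rfl; exact hj' hj)]

end

end PlacementDeliveryArray

theorem stmt2_general (K F S g : ℕ)
    (hF : 1 ≤ F)
    (A : Fin F → Fin K → Option (Fin S))
    (hrow : ∀ i : Fin F,
      (Finset.univ.filter (fun j : Fin K => A i j = none)).card = g - 1)
    (hocc : ∀ s : Fin S,
      (Finset.univ.filter
        (fun p : Fin F × Fin K => A p.1 p.2 = some s)).card = g)
    (hprop : ∀ (i i' : Fin F) (j j' : Fin K) (s : Fin S),
      A i j = some s → A i' j' = some s → (i, j) ≠ (i', j') →
      i ≠ i' ∧ j ≠ j' ∧ A i j' = none ∧ A i' j = none) :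
    K.choose (g - 1) ≤ F := by
  have hexch := PlacementDeliveryArray.exchangeClosed_range_starCols hrow hocc hprop
  have hsub : (univ : Finset (Fin K)).powersetCard (g - 1) ⊆
      univ.image (PlacementDeliveryArray.starCols A) := by
    intro C hC
    simpa using hexch.mem_of_card_eq ⟨⟨0, hF⟩, rfl⟩
      ((mem_powersetCard.1 hC).2.trans (hrow _).symm)
  calc K.choose (g - 1) = #((univ : Finset (Fin K)).powersetCard (g - 1)) := by simp
    _ ≤ #(univ.image (PlacementDeliveryArray.starCols A)) := card_le_card hsub
    _ ≤ F := card_image_le.trans_eq (card_fin F)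

/-- if an `F × K` array over `{*} ∪ [S]` (star modelled by
`none`) has exactly `g - 1` stars per row, every ordinary symbol occurring
exactly `g` times, and the PDA cross property, then `F ≥ C(K, g-1)`. -/
theorem stmt2 (K F S g : ℕ) (hg2 : 2 ≤ g) (hgK : g ≤ K)
    (hF : 1 ≤ F) (hS : 1 ≤ S)
    (A : Fin F → Fin K → Option (Fin S))
    (hrow : ∀ i : Fin F,
      (Finset.univ.filter (fun j : Fin K => A i j = none)).card = g - 1)
    (hocc : ∀ s : Fin S,
      (Finset.univ.filter
        (fun p : Fin F × Fin K => A p.1 p.2 = some s)).card = g)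
    (hprop : ∀ (i i' : Fin F) (j j' : Fin K) (s : Fin S),
      A i j = some s → A i' j' = some s → (i, j) ≠ (i', j') →
      i ≠ i' ∧ j ≠ j' ∧ A i j' = none ∧ A i' j = none) :
    K.choose (g - 1) ≤ F :=
  stmt2_general K F S g hF A hrow hocc hprop
end

section
/- Let A be a (K,F,Z,S) PDA and define M = 1 + Z(N−1)/F and R = S/F for a real N ≥ 2. Then R ≥ K(N−M)/(N−1+K(M−1)); equivalently S/F ≥ K(F−Z)/(F+KZ). -/
/-!
Let `n` be the number of ordinary entries, `g s` the number of occurrences of the symbol `s`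
and `r i` the number of ordinary entries in row `i`. The occurrences of `s` lie in distinct
columns, and all of them except one occurrence `(i, j)` itself sit in columns where row `i` has
a star; hence `g s ≤ (K - r i) + 1`. Summing this over all occurrences gives
`∑ g s ^ 2 ≤ ∑ r i * (K + 1 - r i)`. Since `∑ g s = ∑ r i = n`, Cauchy–Schwarz on both sides
gives `n * F ≤ S * ((K + 1) * F - n)`, and `n = K * (F - Z)` turns this into
`K * F * (F - Z) ≤ S * (F + K * Z)`.
-/

open Finset

theorem mul_card_le_of_sum_sq_le {ι σ : Type*} [Fintype ι] [Fintype σ] (a : ι → ℝ) (b : σ → ℝ)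
    {c : ℝ} (hc : 0 ≤ c) (hab : ∑ s, b s = ∑ i, a i)
    (h : ∑ s, b s ^ 2 ≤ ∑ i, a i * (c - a i)) :
    (∑ i, a i) * Fintype.card ι ≤ Fintype.card σ * (c * Fintype.card ι - ∑ i, a i) := by
  set n := ∑ i, a i
  have hb : n ^ 2 ≤ Fintype.card σ * ∑ s, b s ^ 2 := hab ▸ sq_sum_le_card_mul_sum_sq
  have ha : n ^ 2 ≤ Fintype.card ι * ∑ i, a i ^ 2 := sq_sum_le_card_mul_sum_sq
  have hsplit : ∑ i, a i * (c - a i) = n * c - ∑ i, a i ^ 2 := by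
    simp only [mul_sub, sum_sub_distrib, sq, n, sum_mul]
  rw [hsplit] at h
  have hι : (0 : ℝ) ≤ Fintype.card ι := Nat.cast_nonneg _
  have hσ : (0 : ℝ) ≤ Fintype.card σ := Nat.cast_nonneg _
  have hkey : n * (n * (Fintype.card ι + Fintype.card σ)) ≤
      n * (Fintype.card σ * (c * Fintype.card ι)) := by
    nlinarith [mul_le_mul_of_nonneg_left hb hι, mul_le_mul_of_nonneg_left ha hσ,
      mul_le_mul_of_nonneg_left h (mul_nonneg hι hσ)]
  rcases lt_or_ge 0 n with hn | hn
  · nlinarith [le_of_mul_le_mul_left hkey hn]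
  · nlinarith [mul_nonneg hσ (mul_nonneg hc hι)]

namespace PDA

variable {ι κ σ : Type*} [Fintype ι] [Fintype κ]

def StarAtCrossings (A : ι → κ → Option σ) : Prop :=
  ∀ ⦃p q : ι × κ⦄ ⦃s : σ⦄,
    A p.1 p.2 = some s → A q.1 q.2 = some s → p ≠ q → A p.1 q.2 = none

variable (A : ι → κ → Option σ)

-- `none` is the star.
def entries : Finset (ι × κ) := {p | A p.1 p.2 ≠ none}

def rowEntries (i : ι) : Finset κ := {j | A i j ≠ none}

def rowStars (i : ι) : Finset κ := {j | A i j = none}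

theorem sum_entries_apply_fst {M : Type*} [AddCommMonoid M] (f : ι → M) :
    ∑ p ∈ entries A, f p.1 = ∑ i, #(rowEntries A i) • f i := by
  simp only [entries, rowEntries, sum_filter, Fintype.sum_prod_type, ← sum_const]

theorem sum_card_rowEntries : ∑ i, #(rowEntries A i) = #(entries A) := by
  simpa using (sum_entries_apply_fst A fun _ => (1 : ℕ)).symm

theorem card_entries_of_card_colStars {Z : ℕ} (hcol : ∀ j, #{i | A i j = none} = Z) :
    (#(entries A) : ℝ) = Fintype.card κ * (Fintype.card ι - Z) := by
  have hcolEntries (j : κ) : (#{i | A i j ≠ none} : ℝ) = Fintype.card ι - Z := by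
    rw [← hcol j, eq_sub_iff_add_eq, add_comm]
    exact_mod_cast card_filter_add_card_filter_not (fun i => A i j = none)
  have hcard : #(entries A) = ∑ j, #{i | A i j ≠ none} := by
    simp only [entries, card_filter, Fintype.sum_prod_type_right]
  simp [hcard, hcolEntries, mul_sub]

variable [DecidableEq σ]

def occurrences (s : σ) : Finset (ι × κ) := {p | A p.1 p.2 = some s}

theorem sum_sum_occurrences [Fintype σ] {M : Type*} [AddCommMonoid M] (f : ι × κ → M) :
    ∑ s, ∑ p ∈ occurrences A s, f p = ∑ p ∈ entries A, f p := by
  simp only [occurrences, entries, sum_filter]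
  rw [sum_comm]
  refine sum_congr rfl fun p _ => ?_
  cases A p.1 p.2 <;> simp

theorem sum_card_occurrences [Fintype σ] : ∑ s, #(occurrences A s) = #(entries A) := by
  simpa using sum_sum_occurrences A fun _ => (1 : ℕ)

theorem card_occurrences_le (hA : StarAtCrossings A) {s : σ} {p : ι × κ}
    (hp : p ∈ occurrences A s) : #(occurrences A s) ≤ #(rowStars A p.1) + 1 := by
  classical
  simp only [occurrences, mem_filter, mem_univ, true_and] at hp
  calc #(occurrences A s) ≤ #(insert p.2 (rowStars A p.1)) := by
        refine card_le_card_of_injOn Prod.snd (fun q hq => ?_) (fun q hq q' hq' hqq' => ?_)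
        · simp only [occurrences, coe_filter, mem_univ, true_and, Set.mem_ofPred_eq] at hq
          by_cases hpq : p = q
          · simp [hpq]
          · simp [rowStars, hA hp hq hpq]
        · simp only [occurrences, coe_filter, mem_univ, true_and, Set.mem_ofPred_eq] at hq hq'
          by_contra hne
          have hstar := hA hq hq' hne
          rw [← hqq', hq] at hstar
          exact Option.some_ne_none s hstar
    _ ≤ #(rowStars A p.1) + 1 := card_insert_le _ _

theorem sum_sq_card_occurrences_le [Fintype σ] (hA : StarAtCrossings A) :
    ∑ s, #(occurrences A s) ^ 2 ≤ ∑ i, #(rowEntries A i) * (#(rowStars A i) + 1) :=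
  calc ∑ s, #(occurrences A s) ^ 2 = ∑ s, ∑ _p ∈ occurrences A s, #(occurrences A s) := by
        simp [sq]
    _ ≤ ∑ s, ∑ p ∈ occurrences A s, (#(rowStars A p.1) + 1) :=
        sum_le_sum fun _ _ => sum_le_sum fun _ hp => card_occurrences_le A hA hp
    _ = ∑ i, #(rowEntries A i) * (#(rowStars A i) + 1) := by
        rw [sum_sum_occurrences]
        simpa only [smul_eq_mul] using sum_entries_apply_fst A fun i => #(rowStars A i) + 1

theorem card_entries_mul_le [Fintype σ] (hA : StarAtCrossings A) :
    (#(entries A) : ℝ) * Fintype.card ι ≤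
      Fintype.card σ * ((Fintype.card κ + 1) * Fintype.card ι - #(entries A)) := by
  have hrow : ∑ i, (#(rowEntries A i) : ℝ) = #(entries A) := by
    exact_mod_cast sum_card_rowEntries A
  have hsym : ∑ s, (#(occurrences A s) : ℝ) = #(entries A) := by
    exact_mod_cast sum_card_occurrences A
  have hstars (i : ι) : (#(rowStars A i) : ℝ) = Fintype.card κ - #(rowEntries A i) := by
    have h : #(rowEntries A i) + #(rowStars A i) = Fintype.card κ := by
      simpa [rowEntries, rowStars] using card_filter_add_card_filter_not (s := univ) (A i · ≠ none)
    rw [eq_sub_iff_add_eq, add_comm]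
    exact_mod_cast h
  rw [← hrow]
  refine mul_card_le_of_sum_sq_le _ _ (by positivity) (hsym.trans hrow.symm) ?_
  calc ∑ s, (#(occurrences A s) : ℝ) ^ 2
      ≤ ∑ i, (#(rowEntries A i) : ℝ) * (#(rowStars A i) + 1) := by exact_mod_cast sum_sq_card_occurrences_le A hA
    _ = _ := sum_congr rfl fun i _ => by rw [hstars]; ring

end PDA

theorem stmt3_general (K F Z S : ℕ) (hF : 1 ≤ F)
    (A : Fin F → Fin K → Option (Fin S))
    (hcol : ∀ j : Fin K,
      (Finset.univ.filter (fun i : Fin F => A i j = none)).card = Z)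
    (hprop : ∀ (i i' : Fin F) (j j' : Fin K) (s : Fin S),
      A i j = some s → A i' j' = some s → (i, j) ≠ (i', j') →
      i ≠ i' ∧ j ≠ j' ∧ A i j' = none ∧ A i' j = none)
    (N : ℝ) (hN : 2 ≤ N)
    (M R : ℝ)
    (hM : M = 1 + (Z : ℝ) * (N - 1) / F)
    (hR : R = (S : ℝ) / F) :
    (K : ℝ) * (N - M) / (N - 1 + K * (M - 1)) ≤ R ∧
    (K : ℝ) * ((F : ℝ) - Z) / ((F : ℝ) + K * Z) ≤ (S : ℝ) / F := by
  have hcross : PDA.StarAtCrossings A := fun p q s hp hq hpq =>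
    (hprop p.1 q.1 p.2 q.2 s hp hq (by simpa using hpq)).2.2.1
  have hbound : (K : ℝ) * (F - Z) * F ≤ S * (F + K * Z) := by
    have h := PDA.card_entries_mul_le A hcross
    simp only [PDA.card_entries_of_card_colStars A hcol, Fintype.card_fin] at h
    linarith
  have hF0 : (0 : ℝ) < F := by exact_mod_cast hF
  have hrate : (K : ℝ) * (F - Z) / (F + K * Z) ≤ S / F := by
    rw [div_le_div_iff₀ (by positivity) hF0]
    linarith
  have hN1 : N - 1 ≠ 0 := by linarith
  have hrate_eq : (K : ℝ) * (N - M) / (N - 1 + K * (M - 1)) = K * (F - Z) / (F + K * Z) := by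
    have hnum : (K : ℝ) * (N - M) = (N - 1) / F * (K * (F - Z)) := by
      rw [hM]; field_simp; ring
    have hden : N - 1 + K * (M - 1) = (N - 1) / F * (F + K * Z) := by
      rw [hM]; field_simp; ring
    rw [hnum, hden, mul_div_mul_left _ _ (div_ne_zero hN1 hF0.ne')]
  exact ⟨by rw [hrate_eq, hR]; exact hrate, hrate⟩

/-- for any `(K,F,Z,S)` PDA (star modelled by `none`,
exactly `Z` stars per column, every symbol of `[S]` occurring at least once,
PDA cross property), setting `M = 1 + Z(N-1)/F` and `R = S/F` for a real
`N ≥ 2`, we have `R ≥ K(N-M)/(N-1+K(M-1))`; equivalently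
`S/F ≥ K(F-Z)/(F+KZ)`. -/
theorem stmt3 (K F Z S : ℕ) (hK : 1 ≤ K) (hF : 1 ≤ F) (hS : 1 ≤ S)
    (hZF : Z ≤ F)
    (A : Fin F → Fin K → Option (Fin S))
    (hcol : ∀ j : Fin K,
      (Finset.univ.filter (fun i : Fin F => A i j = none)).card = Z)
    (hsurj : ∀ s : Fin S, ∃ i j, A i j = some s)
    (hprop : ∀ (i i' : Fin F) (j j' : Fin K) (s : Fin S),
      A i j = some s → A i' j' = some s → (i, j) ≠ (i', j') →
      i ≠ i' ∧ j ≠ j' ∧ A i j' = none ∧ A i' j = none)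
    (N : ℝ) (hN : 2 ≤ N)
    (M R : ℝ)
    (hM : M = 1 + (Z : ℝ) * (N - 1) / F)
    (hR : R = (S : ℝ) / F) :
    (K : ℝ) * (N - M) / (N - 1 + K * (M - 1)) ≤ R ∧
    (K : ℝ) * ((F : ℝ) - Z) / ((F : ℝ) + K * Z) ≤ (S : ℝ) / F :=
  stmt3_general K F Z S hF A hcol hprop N hN M R hM hR
end

section
/- If a (K,F,Z,S) PDA satisfies 1 + Z(N−1)/F = 1 + t(N−1)/K and S/F = (K−t)/(t+1) for some t ∈ [1:K−1] and N ≥ 2, then KZ/F = t, K(F−Z)/S = t+1, and F ≥ C(K,t). -/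
open Finset

lemma sum_sub_sq_identity {ι : Type*} (s : Finset ι) (f : ι → ℤ) :
    ∑ i ∈ s, ∑ j ∈ s, (f i - f j)^2
      = 2 * ((s.card : ℤ) * ∑ i ∈ s, f i^2 - (∑ i ∈ s, f i)^2) := by
  have h1 : ∀ i ∈ s, ∑ j ∈ s, (f i - f j)^2
      = (s.card : ℤ) * f i ^ 2 - f i * (2 * ∑ j ∈ s, f j) + ∑ j ∈ s, f j ^ 2 := by
    intro i _
    rw [Finset.sum_congr rfl
      (fun j _ => (by ring : (f i - f j)^2 = f i^2 - 2 * f i * f j + f j^2)),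
      Finset.sum_add_distrib, Finset.sum_sub_distrib, Finset.sum_const, ← Finset.mul_sum]
    ring
  rw [Finset.sum_congr rfl h1, Finset.sum_add_distrib, Finset.sum_sub_distrib,
    Finset.sum_const, ← Finset.mul_sum, ← Finset.sum_mul, nsmul_eq_mul]
  ring

lemma cs_eq_const {ι : Type*} (s : Finset ι) (f : ι → ℤ)
    (h : (s.card : ℤ) * ∑ i ∈ s, f i^2 ≤ (∑ i ∈ s, f i)^2) :
    ∀ i ∈ s, ∀ j ∈ s, f i = f j := by
  have hz : ∑ i ∈ s, ∑ j ∈ s, (f i - f j)^2 ≤ 0 := by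
    rw [sum_sub_sq_identity]; linarith
  have hz' : ∑ i ∈ s, ∑ j ∈ s, (f i - f j)^2 = 0 :=
    le_antisymm hz (Finset.sum_nonneg fun i _ => Finset.sum_nonneg fun j _ => sq_nonneg _)
  intro i hi j hj
  have h1 := (Finset.sum_eq_zero_iff_of_nonneg
    (fun i _ => Finset.sum_nonneg fun j _ => sq_nonneg _)).1 hz' i hi
  have h2 := (Finset.sum_eq_zero_iff_of_nonneg (fun j _ => sq_nonneg _)).1 h1 j hj
  have := pow_eq_zero_iff (n := 2) (by norm_num) |>.1 h2
  linarith

lemma pda_counts (K F Z S t : ℕ) (hF : 1 ≤ F) (hS : 1 ≤ S) (hZF : Z ≤ F)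
    (htK : t < K)
    (A : Fin F → Fin K → Option (Fin S))
    (hcol : ∀ j : Fin K, (univ.filter (fun i : Fin F => A i j = none)).card = Z)
    (hprop : ∀ (i i' : Fin F) (j j' : Fin K) (s : Fin S),
      A i j = some s → A i' j' = some s → (i, j) ≠ (i', j') →
      i ≠ i' ∧ j ≠ j' ∧ A i j' = none ∧ A i' j = none)
    (hKZ : K * Z = t * F)
    (hStF : S * (t + 1) = (K - t) * F) :
    (∀ i : Fin F, (univ.filter fun j => A i j = none).card = t) ∧
    (∀ s : Fin S,
      (univ.filter fun p : Fin F × Fin K => A p.1 p.2 = some s).card = t + 1) := by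
  classical
  set a : Fin F → ℕ := fun i => (univ.filter fun j => ¬ A i j = none).card with ha
  set b : Fin F → ℕ := fun i => (univ.filter fun j => A i j = none).card with hb
  set r : Fin S → ℕ :=
    fun s => (univ.filter fun p : Fin F × Fin K => A p.1 p.2 = some s).card with hr
  set n : ℕ := (K - t) * F with hn
  have haS : ∀ i, a i = ∑ j : Fin K, (if ¬ A i j = none then 1 else 0) := by
    intro i; simp only [ha, Finset.card_filter]
  have hrS : ∀ s, r s = ∑ i : Fin F, ∑ j : Fin K, (if A i j = some s then 1 else 0) := by
    intro s; simp only [hr, Finset.card_filter, Fintype.sum_prod_type]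
  have hab : ∀ i, b i + a i = K := by
    intro i
    have := Finset.card_filter_add_card_filter_not
      (s := (univ : Finset (Fin K))) (p := fun j => A i j = none)
    simpa [ha, hb] using this
  have hcolA : ∀ j : Fin K,
      (∑ i : Fin F, (if ¬ A i j = none then 1 else 0)) = F - Z := by
    intro j
    have h2 := Finset.card_filter_add_card_filter_not
      (s := (univ : Finset (Fin F))) (p := fun i => A i j = none)
    rw [hcol j] at h2
    simp only [Finset.card_univ, Fintype.card_fin] at h2
    rw [← Finset.card_filter]
    omega
  have hnalt : K * (F - Z) = n := by
    rw [hn]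
    zify [hZF, htK.le]
    have hKZ' : (K : ℤ) * (Z : ℤ) = (t : ℤ) * (F : ℤ) := by exact_mod_cast hKZ
    linarith
  have hsum_a : ∑ i : Fin F, a i = n := by
    rw [Finset.sum_congr rfl fun i _ => haS i, Finset.sum_comm,
      Finset.sum_congr rfl fun j _ => hcolA j, Finset.sum_const, smul_eq_mul,
      Finset.card_univ, Fintype.card_fin, ← hnalt]
  have hsum_r : ∑ s : Fin S, r s = n := by
    have h1 : ∀ i j, (∑ s : Fin S, if A i j = some s then 1 else 0)
        = (if ¬ A i j = none then 1 else 0) := by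
      intro i j
      cases h : A i j with
      | none => simp [h]
      | some s0 => simp [h]
    calc ∑ s : Fin S, r s
        = ∑ s : Fin S, ∑ i : Fin F, ∑ j : Fin K, (if A i j = some s then 1 else 0) :=
          Finset.sum_congr rfl fun s _ => hrS s
      _ = ∑ i : Fin F, ∑ s : Fin S, ∑ j : Fin K, (if A i j = some s then 1 else 0) :=
          Finset.sum_comm
      _ = ∑ i : Fin F, ∑ j : Fin K, ∑ s : Fin S, (if A i j = some s then 1 else 0) :=
          Finset.sum_congr rfl fun i _ => Finset.sum_comm
      _ = ∑ i : Fin F, ∑ j : Fin K, (if ¬ A i j = none then 1 else 0) :=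
          Finset.sum_congr rfl fun i _ => Finset.sum_congr rfl fun j _ => h1 i j
      _ = ∑ i : Fin F, a i := Finset.sum_congr rfl fun i _ => (haS i).symm
      _ = n := hsum_a
  -- key inequality
  have hkey : ∀ (s : Fin S) (i : Fin F) (j : Fin K), A i j = some s →
      a i + r s ≤ K + 1 := by
    intro s i j hs
    set occ : Finset (Fin F × Fin K) :=
      univ.filter fun p : Fin F × Fin K => A p.1 p.2 = some s with hocc
    have hmem : ∀ p : Fin F × Fin K, p ∈ occ ↔ A p.1 p.2 = some s := by
      intro p; simp [hocc]
    have hocc_card : occ.card = r s := by simp only [hr, hocc]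
    have hsnd_inj : Set.InjOn Prod.snd (occ : Set (Fin F × Fin K)) := by
      intro p hp q hq hpq
      by_contra hne
      have h := hprop p.1 q.1 p.2 q.2 s ((hmem p).1 hp) ((hmem q).1 hq)
        (by simpa [Prod.ext_iff] using hne)
      exact h.2.1 hpq
    have hpm : (i, j) ∈ occ := (hmem (i, j)).2 hs
    set D : Finset (Fin K) := (occ.erase (i, j)).image Prod.snd with hD
    have hDcard : D.card = r s - 1 := by
      rw [hD, Finset.card_image_of_injOn
        (hsnd_inj.mono (Finset.coe_subset.2 (Finset.erase_subset _ _))),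
        Finset.card_erase_of_mem hpm, hocc_card]
    have hDsub : D ⊆ univ.filter fun j' => A i j' = none := by
      intro j' hj'
      obtain ⟨q, hq, hq2⟩ := Finset.mem_image.1 hj'
      have hqo : q ∈ occ := Finset.mem_of_mem_erase hq
      have hqne : (i, j) ≠ q := fun h => (Finset.ne_of_mem_erase hq) h.symm
      have h := hprop i q.1 j q.2 s hs ((hmem q).1 hqo) hqne
      simp only [Finset.mem_filter, Finset.mem_univ, true_and]
      rw [← hq2]
      exact h.2.2.1
    have hbD : r s - 1 ≤ b i := by
      rw [← hDcard, hb]; exact Finset.card_le_card hDsub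
    have hr1 : 1 ≤ r s := by
      rw [← hocc_card]
      exact Finset.card_pos.2 ⟨(i, j), hpm⟩
    have := hab i
    omega
  -- summed inequality
  have hsumineq : (∑ i : Fin F, a i * a i) + (∑ s : Fin S, r s * r s)
      ≤ n * (K + 1) := by
    have hpoint : ∀ (i : Fin F) (j : Fin K),
        ((if ¬ A i j = none then a i else 0)
          + ∑ s : Fin S, (if A i j = some s then r s else 0))
        ≤ (if ¬ A i j = none then K + 1 else 0) := by
      intro i j
      cases h : A i j with
      | none => simp
      | some s0 =>
        have h2 : (∑ s : Fin S, if (some s0 : Option (Fin S)) = some s then r s else 0)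
            = r s0 := by simp
        simp only [h, h2]
        have := hkey s0 i j h
        simpa using this
    have hsum := Finset.sum_le_sum (s := (univ : Finset (Fin F)))
      (fun i _ => Finset.sum_le_sum (s := (univ : Finset (Fin K)))
        (fun j _ => hpoint i j))
    have hL : ∑ i : Fin F, ∑ j : Fin K,
        ((if ¬ A i j = none then a i else 0)
          + ∑ s : Fin S, (if A i j = some s then r s else 0))
        = (∑ i : Fin F, a i * a i) + (∑ s : Fin S, r s * r s) := by
      rw [Finset.sum_congr rfl fun i (_ : i ∈ univ) => Finset.sum_add_distrib,
        Finset.sum_add_distrib]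
      congr 1
      · refine Finset.sum_congr rfl fun i _ => ?_
        have : ∀ j : Fin K, (if ¬ A i j = none then a i else 0)
            = a i * (if ¬ A i j = none then 1 else 0) := by
          intro j; by_cases h : A i j = none <;> simp [h]
        rw [Finset.sum_congr rfl fun j _ => this j, ← Finset.mul_sum, ← haS]
      · calc ∑ i : Fin F, ∑ j : Fin K, ∑ s : Fin S, (if A i j = some s then r s else 0)
            = ∑ i : Fin F, ∑ s : Fin S, ∑ j : Fin K, (if A i j = some s then r s else 0) :=
              Finset.sum_congr rfl fun i _ => Finset.sum_comm
          _ = ∑ s : Fin S, ∑ i : Fin F, ∑ j : Fin K, (if A i j = some s then r s else 0) :=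
              Finset.sum_comm
          _ = ∑ s : Fin S, r s * r s := by
              refine Finset.sum_congr rfl fun s _ => ?_
              have h3 : ∀ (i : Fin F) (j : Fin K), (if A i j = some s then r s else 0)
                  = r s * (if A i j = some s then 1 else 0) := by
                intro i j; by_cases h : A i j = some s <;> simp [h]
              rw [Finset.sum_congr rfl fun i (_ : i ∈ univ) =>
                Finset.sum_congr rfl fun j (_ : j ∈ univ) => h3 i j]
              rw [Finset.sum_congr rfl fun i (_ : i ∈ univ) =>
                (Finset.mul_sum (univ : Finset (Fin K)) _ (r s)).symm]
              rw [← Finset.mul_sum, ← hrS]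
    have hR : ∑ i : Fin F, ∑ j : Fin K, (if ¬ A i j = none then K + 1 else 0)
        = n * (K + 1) := by
      have h3 : ∀ (i : Fin F) (j : Fin K), (if ¬ A i j = none then K + 1 else 0)
          = (if ¬ A i j = none then 1 else 0) * (K + 1) := by
        intro i j; by_cases h : A i j = none <;> simp [h]
      rw [Finset.sum_congr rfl fun i (_ : i ∈ univ) =>
        Finset.sum_congr rfl fun j (_ : j ∈ univ) => h3 i j]
      rw [Finset.sum_congr rfl fun i (_ : i ∈ univ) =>
        (Finset.sum_mul (univ : Finset (Fin K)) _ (K + 1)).symm]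
      rw [← Finset.sum_mul]
      congr 1
      rw [← hsum_a]
      exact Finset.sum_congr rfl fun i _ => (haS i).symm
    rw [hL, hR] at hsum
    exact hsum
  -- pass to ℤ and apply Cauchy-Schwarz equality analysis
  have hsum_aZ : ∑ i : Fin F, ((a i : ℤ)) = (n : ℤ) := by exact_mod_cast hsum_a
  have hsum_rZ : ∑ s : Fin S, ((r s : ℤ)) = (n : ℤ) := by exact_mod_cast hsum_r
  have hcF : ((K - t : ℕ) : ℤ) * (F : ℤ) = (n : ℤ) := by exact_mod_cast hn.symm
  have hcS : (S : ℤ) * ((t : ℤ) + 1) = (n : ℤ) := by exact_mod_cast hStF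
  have hKc : (K : ℤ) + 1 = ((K - t : ℕ) : ℤ) + (t : ℤ) + 1 := by
    push_cast [htK.le]; ring
  set X : ℤ := ∑ i : Fin F, (a i : ℤ) ^ 2 with hX
  set Y : ℤ := ∑ s : Fin S, (r s : ℤ) ^ 2 with hY
  have hCSa : ((n : ℤ)) ^ 2 ≤ (F : ℤ) * X := by
    have h := sq_sum_le_card_mul_sum_sq (s := (univ : Finset (Fin F)))
      (f := fun i => (a i : ℤ))
    simpa [hX, Finset.card_univ, Fintype.card_fin, hsum_aZ] using h
  have hCSr : ((n : ℤ)) ^ 2 ≤ (S : ℤ) * Y := by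
    have h := sq_sum_le_card_mul_sum_sq (s := (univ : Finset (Fin S)))
      (f := fun s => (r s : ℤ))
    simpa [hY, Finset.card_univ, Fintype.card_fin, hsum_rZ] using h
  have hZineq : X + Y ≤ (n : ℤ) * ((K : ℤ) + 1) := by
    have h : ((∑ i : Fin F, a i * a i : ℕ) : ℤ) + ((∑ s : Fin S, r s * r s : ℕ) : ℤ)
        ≤ ((n * (K + 1) : ℕ) : ℤ) := by exact_mod_cast hsumineq
    push_cast at h
    simpa [hX, hY, pow_two] using h
  have hid : (F : ℤ) * S * ((n : ℤ) * ((K : ℤ) + 1))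
      = (S : ℤ) * (n : ℤ) ^ 2 + (F : ℤ) * (n : ℤ) ^ 2 := by
    linear_combination ((S : ℤ) * n) * hcF + ((F : ℤ) * n) * hcS
      + ((F : ℤ) * S * n) * hKc
  have hFpos : (0 : ℤ) < F := by exact_mod_cast hF
  have hSpos : (0 : ℤ) < S := by exact_mod_cast hS
  have h1 : (F : ℤ) * S * (X + Y) ≤ (F : ℤ) * S * ((n : ℤ) * ((K : ℤ) + 1)) :=
    mul_le_mul_of_nonneg_left hZineq (by positivity)
  have h2 : (F : ℤ) * (n : ℤ) ^ 2 ≤ (F : ℤ) * ((S : ℤ) * Y) :=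
    mul_le_mul_of_nonneg_left hCSr (by positivity)
  have h3 : (S : ℤ) * (n : ℤ) ^ 2 ≤ (S : ℤ) * ((F : ℤ) * X) :=
    mul_le_mul_of_nonneg_left hCSa (by positivity)
  have e1 : (F : ℤ) * S * (X + Y) = (S : ℤ) * ((F : ℤ) * X) + (F : ℤ) * ((S : ℤ) * Y) := by
    ring
  have h1' : (F : ℤ) * S * (X + Y) ≤ (S : ℤ) * (n : ℤ) ^ 2 + (F : ℤ) * (n : ℤ) ^ 2 := by
    rw [← hid]; exact h1
  have hFXle : (F : ℤ) * X ≤ (n : ℤ) ^ 2 := by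
    have hS' : (S : ℤ) * ((F : ℤ) * X) ≤ (S : ℤ) * (n : ℤ) ^ 2 := by linarith
    exact le_of_mul_le_mul_left hS' hSpos
  have hSYle : (S : ℤ) * Y ≤ (n : ℤ) ^ 2 := by
    have hF' : (F : ℤ) * ((S : ℤ) * Y) ≤ (F : ℤ) * (n : ℤ) ^ 2 := by linarith
    exact le_of_mul_le_mul_left hF' hFpos
  -- all a i are equal, all r s are equal
  have hconsta := cs_eq_const (univ : Finset (Fin F)) (fun i => (a i : ℤ))
    (by simpa [Finset.card_univ, Fintype.card_fin, hsum_aZ, ← hX] using hFXle)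
  have hconstr := cs_eq_const (univ : Finset (Fin S)) (fun s => (r s : ℤ))
    (by simpa [Finset.card_univ, Fintype.card_fin, hsum_rZ, ← hY] using hSYle)
  have havals : ∀ i : Fin F, a i = K - t := by
    intro i
    have hsum' : ∑ i' : Fin F, ((a i' : ℤ)) = (F : ℤ) * (a i : ℤ) := by
      rw [Finset.sum_congr rfl fun i' _ =>
        hconsta i' (Finset.mem_univ i') i (Finset.mem_univ i), Finset.sum_const,
        Finset.card_univ, Fintype.card_fin, nsmul_eq_mul]
    have : (F : ℤ) * (a i : ℤ) = ((K - t : ℕ) : ℤ) * (F : ℤ) := by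
      rw [← hsum', hsum_aZ, ← hcF]
    have h4 : (a i : ℤ) = ((K - t : ℕ) : ℤ) :=
      mul_left_cancel₀ (ne_of_gt hFpos) (by linarith)
    exact_mod_cast h4
  have hrvals : ∀ s : Fin S, r s = t + 1 := by
    intro s
    have hsum' : ∑ s' : Fin S, ((r s' : ℤ)) = (S : ℤ) * (r s : ℤ) := by
      rw [Finset.sum_congr rfl fun s' _ =>
        hconstr s' (Finset.mem_univ s') s (Finset.mem_univ s), Finset.sum_const,
        Finset.card_univ, Fintype.card_fin, nsmul_eq_mul]
    have : (S : ℤ) * (r s : ℤ) = (S : ℤ) * ((t : ℤ) + 1) := by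
      rw [← hsum', hsum_rZ, ← hcS]
    have h4 : (r s : ℤ) = (t : ℤ) + 1 :=
      mul_left_cancel₀ (ne_of_gt hSpos) this
    exact_mod_cast h4
  refine ⟨fun i => ?_, fun s => hrvals s⟩
  have h5 := hab i
  have h6 := havals i
  have : b i = t := by omega
  exact this


lemma pda_main (K F S t : ℕ) (hF : 1 ≤ F)
    (A : Fin F → Fin K → Option (Fin S))
    (hprop : ∀ (i i' : Fin F) (j j' : Fin K) (s : Fin S),
      A i j = some s → A i' j' = some s → (i, j) ≠ (i', j') →
      i ≠ i' ∧ j ≠ j' ∧ A i j' = none ∧ A i' j = none)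
    (hrow : ∀ i : Fin F, (univ.filter fun j => A i j = none).card = t)
    (hocc : ∀ s : Fin S,
      (univ.filter fun p : Fin F × Fin K => A p.1 p.2 = some s).card = t + 1) :
    K.choose t ≤ F := by
  classical
  set B : Fin F → Finset (Fin K) := fun i => univ.filter fun j => A i j = none with hB
  have hBcard : ∀ i, (B i).card = t := hrow
  set occ : Fin S → Finset (Fin F × Fin K) :=
    fun s => univ.filter fun p : Fin F × Fin K => A p.1 p.2 = some s with hocc_def
  have hmem_occ : ∀ s p, p ∈ occ s ↔ A p.1 p.2 = some s := by
    intro s p; simp [hocc_def]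
  have hsnd_inj : ∀ s : Fin S, Set.InjOn Prod.snd (occ s : Set (Fin F × Fin K)) := by
    intro s p hp q hq hpq
    by_contra hne
    have h := hprop p.1 q.1 p.2 q.2 s ((hmem_occ s p).1 hp) ((hmem_occ s q).1 hq)
      (by simpa [Prod.ext_iff] using hne)
    exact h.2.1 hpq
  set Cs : Fin S → Finset (Fin K) := fun s => (occ s).image Prod.snd with hCs
  have hCscard : ∀ s, (Cs s).card = t + 1 := by
    intro s
    rw [hCs]
    rw [Finset.card_image_of_injOn (hsnd_inj s)]
    exact hocc s
  have hBocc : ∀ (s : Fin S) (p : Fin F × Fin K), p ∈ occ s →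
      B p.1 = (Cs s).erase p.2 := by
    intro s p hp
    have hsub : (Cs s).erase p.2 ⊆ B p.1 := by
      intro j' hj'
      have hj'ne : j' ≠ p.2 := Finset.ne_of_mem_erase hj'
      obtain ⟨q, hq, hq2⟩ := Finset.mem_image.1 (Finset.mem_of_mem_erase hj')
      have hqp : (p.1, p.2) ≠ (q.1, q.2) := by
        intro h
        exact hj'ne (by rw [← hq2]; exact (congrArg Prod.snd h).symm ▸ rfl)
      have h := hprop p.1 q.1 p.2 q.2 s ((hmem_occ s p).1 hp) ((hmem_occ s q).1 hq) hqp
      have : A p.1 j' = none := by rw [← hq2]; exact h.2.2.1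
      simp [hB, this]
    have hpc : p.2 ∈ Cs s := Finset.mem_image.2 ⟨p, hp, rfl⟩
    have hc : ((Cs s).erase p.2).card = t := by
      rw [Finset.card_erase_of_mem hpc, hCscard s]
      omega
    exact (Finset.eq_of_subset_of_card_le hsub (by rw [hBcard, hc])).symm
  -- exchange step
  have hexch : ∀ (i : Fin F) (x : Fin K), x ∉ B i → ∀ y ∈ B i,
      ∃ i' : Fin F, B i' = (insert x (B i)).erase y := by
    intro i x hx y hy
    have hx' : A i x ≠ none := by
      intro h; exact hx (by simp [hB, h])
    obtain ⟨s, hs⟩ : ∃ s, A i x = some s := by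
      cases h : A i x with
      | none => exact absurd h hx'
      | some s => exact ⟨s, rfl⟩
    have hpmem : (i, x) ∈ occ s := (hmem_occ s (i, x)).2 hs
    have hxCs : x ∈ Cs s := Finset.mem_image.2 ⟨(i, x), hpmem, rfl⟩
    have hBi : B i = (Cs s).erase x := hBocc s (i, x) hpmem
    have hins : insert x (B i) = Cs s := by rw [hBi, Finset.insert_erase hxCs]
    have hyCs : y ∈ Cs s := by
      rw [hBi] at hy; exact Finset.mem_of_mem_erase hy
    obtain ⟨q, hq, hq2⟩ := Finset.mem_image.1 hyCs
    refine ⟨q.1, ?_⟩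
    rw [hins, hBocc s q hq, hq2]
  -- main induction
  have main : ∀ k : ℕ, ∀ T : Finset (Fin K), T.card = t →
      ∀ i : Fin F, (T \ B i).card = k → ∃ i', B i' = T := by
    intro k
    induction k with
    | zero =>
      intro T hT i hi
      have hsub : T ⊆ B i := Finset.sdiff_eq_empty_iff_subset.1 (Finset.card_eq_zero.1 hi)
      exact ⟨i, (Finset.eq_of_subset_of_card_le hsub (by rw [hBcard, hT])).symm⟩
    | succ k ih =>
      intro T hT i hi
      obtain ⟨x, hx⟩ : (T \ B i).Nonempty := Finset.card_pos.1 (by omega)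
      have hxT : x ∈ T := (Finset.mem_sdiff.1 hx).1
      have hxB : x ∉ B i := (Finset.mem_sdiff.1 hx).2
      have hcc : (B i \ T).card = (T \ B i).card :=
        Finset.card_sdiff_comm (by rw [hBcard, hT])
      obtain ⟨y, hy⟩ : (B i \ T).Nonempty := Finset.card_pos.1 (by omega)
      have hyB : y ∈ B i := (Finset.mem_sdiff.1 hy).1
      have hyT : y ∉ T := (Finset.mem_sdiff.1 hy).2
      obtain ⟨i', hi'⟩ := hexch i x hxB y hyB
      have hstep : T \ B i' = (T \ B i).erase x := by
        ext j
        simp only [Finset.mem_sdiff, Finset.mem_erase, hi', Finset.mem_insert]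
        constructor
        · rintro ⟨hjT, hj⟩
          have hjy : j ≠ y := fun h => hyT (h ▸ hjT)
          have h2 : ¬(j = x ∨ j ∈ B i) := fun h => hj ⟨hjy, h⟩
          push_neg at h2
          exact ⟨h2.1, hjT, h2.2⟩
        · rintro ⟨hjx, hjT, hjB⟩
          exact ⟨hjT, fun h => (h.2).elim hjx hjB⟩
      apply ih T hT i'
      rw [hstep, Finset.card_erase_of_mem hx, hi]
      omega
  -- conclusion
  have hex : ∀ T : Finset (Fin K), T.card = t → ∃ i', B i' = T := fun T hTc =>
    main ((T \ B ⟨0, hF⟩).card) T hTc ⟨0, hF⟩ rfl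
  have hcard : (Finset.univ.powersetCard t : Finset (Finset (Fin K))).card
      ≤ (Finset.univ : Finset (Fin F)).card := by
    apply Finset.card_le_card_of_injOn
      (fun T => if h : ∃ i', B i' = T then h.choose else ⟨0, hF⟩)
    · intro T hT; exact Finset.mem_univ _
    · intro T1 h1 T2 h2 heq
      have e1 : ∃ i', B i' = T1 :=
        hex T1 (Finset.mem_powersetCard.1 (Finset.mem_coe.1 h1)).2
      have e2 : ∃ i', B i' = T2 :=
        hex T2 (Finset.mem_powersetCard.1 (Finset.mem_coe.1 h2)).2
      simp only [dif_pos e1, dif_pos e2] at heq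
      rw [← e1.choose_spec, ← e2.choose_spec, heq]
  simpa [Finset.card_powersetCard] using hcard


/-- if a `(K,F,Z,S)` PDA achieves the MAN memory-load point,
i.e. `1 + Z(N-1)/F = 1 + t(N-1)/K` and `S/F = (K-t)/(t+1)` for some
`t ∈ [1:K-1]` and `N ≥ 2`, then `KZ/F = t`, `K(F-Z)/S = t+1`, and
`F ≥ C(K,t)`. -/
theorem stmt5 (K F Z S : ℕ) (hK : 1 ≤ K) (hF : 1 ≤ F) (hS : 1 ≤ S)
    (hZF : Z ≤ F)
    (A : Fin F → Fin K → Option (Fin S))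
    (hcol : ∀ j : Fin K,
      (Finset.univ.filter (fun i : Fin F => A i j = none)).card = Z)
    (hsurj : ∀ s : Fin S, ∃ i j, A i j = some s)
    (hprop : ∀ (i i' : Fin F) (j j' : Fin K) (s : Fin S),
      A i j = some s → A i' j' = some s → (i, j) ≠ (i', j') →
      i ≠ i' ∧ j ≠ j' ∧ A i j' = none ∧ A i' j = none)
    (t : ℕ) (ht1 : 1 ≤ t) (htK : t ≤ K - 1)
    (N : ℝ) (hN : 2 ≤ N)
    (hMem : 1 + (Z : ℝ) * (N - 1) / F = 1 + (t : ℝ) * (N - 1) / K)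
    (hLoad : (S : ℝ) / F = ((K : ℝ) - t) / (t + 1)) :
    (K : ℝ) * Z / F = t ∧
    (K : ℝ) * ((F : ℝ) - Z) / S = t + 1 ∧
    K.choose t ≤ F := by
  have htK' : t < K := by omega
  have hF0 : (F : ℝ) ≠ 0 := by positivity
  have hK0 : (K : ℝ) ≠ 0 := by positivity
  have hS0 : (S : ℝ) ≠ 0 := by positivity
  have hN1 : (N : ℝ) - 1 ≠ 0 := by linarith
  -- derive K * Z = t * F
  have hMem' : (Z : ℝ) * (N - 1) / F = (t : ℝ) * (N - 1) / K := by linarith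
  have hKZr : (K : ℝ) * Z = t * F := by
    field_simp at hMem'
    have h := mul_right_cancel₀ hN1
      (show (Z : ℝ) * K * (N - 1) = (t : ℝ) * F * (N - 1) by
        first
        | linear_combination hMem'
        | linear_combination -hMem'
        | linear_combination (N - 1) * hMem'
        | linear_combination (-(N - 1)) * hMem')
    linarith
  have hKZ : K * Z = t * F := by exact_mod_cast hKZr
  -- derive S * (t+1) = (K - t) * F
  have hLoad' : (S : ℝ) * ((t : ℝ) + 1) = ((K : ℝ) - t) * F := by
    field_simp at hLoad
    linarith
  have hStF : S * (t + 1) = (K - t) * F := by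
    have : (S : ℝ) * ((t : ℝ) + 1) = (((K - t : ℕ)) : ℝ) * F := by
      rw [hLoad']
      congr 1
      push_cast [htK'.le]
      ring
    exact_mod_cast this
  obtain ⟨hrow, hocc⟩ := pda_counts K F Z S t hF hS hZF htK' A hcol hprop hKZ hStF
  refine ⟨?_, ?_, pda_main K F S t hF A hprop hrow hocc⟩
  · rw [div_eq_iff hF0]
    push_cast at hKZr ⊢
    linarith
  · rw [div_eq_iff hS0]
    have h2 : (S : ℝ) * ((t : ℝ) + 1) = ((K : ℝ) - t) * F := hLoad'
    have h3 : (K : ℝ) * Z = t * F := hKZr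
    ring_nf
    nlinarith [h2, h3]
end

section
/- In an (N,K) SP-LFR system with N≥2, for every integer u with 1 ≤ u ≤ min(⌊N/2⌋, K), the optimal load satisfies R*(M) ≥ (uN − u²M)/(N−1) for all M ∈ [1,N]; hence R*(M) ≥ max over such u of (uN − u²M)/(N−1). -/
open scoped BigOperators

/-- An `(N,K)` SP-LFR scheme with file length `B` over the finite field `F`,
memory size `M` and load `R`.  The server's randomness is a probability mass
function `prand` on a finite set `P`.  Files are elements `w : Fin N → Fin B → F`,
demands are coefficient vectors `d : Fin K → Fin N → F`.  Correctness,
security (`I(W_{[N]}; X) = 0`) and privacy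
(`I(d_{[K]∖S}; X, d_S, Z_S | W_{[N]}) = 0` against any nonempty colluding set
`S`) are expressed in their equivalent combinatorial/distributional form for
deterministic encoders driven by the randomness `P`. -/
structure SPLFRScheme (F : Type*) [Field F] [Fintype F]
    (N K B : ℕ) (M R : ℝ) where
  P : Type
  [finP : Fintype P]
  prand : PMF P
  /-- cache encoding: `Z_k = φ_k(P, W_{[N]})`, at most `⌊MB⌋` symbols -/
  cache : Fin K → P → (Fin N → Fin B → F) → Fin ⌊M * (B : ℝ)⌋₊ → F
  /-- delivery signal: `X = φ(P, d_{[K]}, W_{[N]})`, at most `⌊RB⌋` symbols -/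
  enc : P → (Fin K → Fin N → F) → (Fin N → Fin B → F) → Fin ⌊R * (B : ℝ)⌋₊ → F
  dec : Fin K → (Fin ⌊R * (B : ℝ)⌋₊ → F) → (Fin N → F) →
      (Fin ⌊M * (B : ℝ)⌋₊ → F) → Fin B → F
  /-- correctness: `H(W̄_{d_k} | X, d_k, Z_k) = 0`, i.e. each user `k` can
  decode the demanded linear combination `∑_n d_{k,n} W_n`. -/
  correct : ∀ p ∈ prand.support, ∀ (d : Fin K → Fin N → F)
      (w : Fin N → Fin B → F) (k : Fin K),
      dec k (enc p d w) (d k) (cache k p w) = fun b => ∑ n, d k n * w n b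
  /-- security: `I(W_{[N]}; X) = 0`, i.e. the distribution of the delivery
  signal does not depend on the library realization. -/
  secure : ∀ (d : Fin K → Fin N → F) (w w' : Fin N → Fin B → F)
      (x : Fin ⌊R * (B : ℝ)⌋₊ → F),
      prand.toOuterMeasure {p | enc p d w = x} =
      prand.toOuterMeasure {p | enc p d w' = x}
  /-- privacy: `I(d_{[K]∖S}; X, d_S, Z_S | W_{[N]}) = 0` for every nonempty
  `S ⊆ [K]`: the joint distribution of the signal and the caches of the
  colluding set `S` does not depend on the demands outside `S`. -/
  privacy : ∀ (S : Finset (Fin K)), S.Nonempty →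
      ∀ (w : Fin N → Fin B → F) (d d' : Fin K → Fin N → F),
      (∀ k ∈ S, d k = d' k) →
      ∀ (x : Fin ⌊R * (B : ℝ)⌋₊ → F) (z : Fin K → Fin ⌊M * (B : ℝ)⌋₊ → F),
      prand.toOuterMeasure {p | enc p d w = x ∧ ∀ k ∈ S, cache k p w = z k} =
      prand.toOuterMeasure {p | enc p d' w = x ∧ ∀ k ∈ S, cache k p w = z k}

/-- The optimal load `R*(M) = liminf_{B→∞} inf {R : (M,R) achievable}`. -/
noncomputable def Rstar (F : Type*) [Field F] [Fintype F]
    (N K : ℕ) (M : ℝ) : ℝ :=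
  Filter.liminf
    (fun B : ℕ => sInf {R : ℝ | 0 ≤ R ∧ Nonempty (SPLFRScheme F N K B M R)})
    Filter.atTop

/-!
Cut-set argument: fix `t = ⌊(N-1)/u⌋` and let the demand vector `D_j` (`j ≤ t`) ask user `k < u`
for the file `W_{uj+k}`. The signals for `D_0, …, D_t` together with the caches of users
`0, …, u-1` determine every file. By security, the randomness can be chosen so that the signal
for `D_t` is the same for every library, so the library is already determined by `t` signals
and `u` caches, and `N B ≤ t R B + u M B`. Multiplying `N ≤ t R + u M` by `u` and using
`u t ≤ N - 1` gives the bound. The liminf defining `R*` is only meaningful because the loads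
are bounded above: a one-time pad (user `k` caches a uniform key `p_k`, the server sends
`d_k · W + p_k`) achieves `R = K`.
-/

open Function

theorem PMF.toOuterMeasure_uniformOfFintype_preimage_equiv {α : Type*} [Fintype α] [Nonempty α]
    (σ : α ≃ α) (s : Set α) :
    (PMF.uniformOfFintype α).toOuterMeasure (σ ⁻¹' s) =
      (PMF.uniformOfFintype α).toOuterMeasure s := by
  classical
  rw [PMF.toOuterMeasure_uniformOfFintype_apply, PMF.toOuterMeasure_uniformOfFintype_apply,
    Fintype.card_congr (σ.subtypeEquiv (p := (· ∈ σ ⁻¹' s)) (q := (· ∈ s)) fun _ => Iff.rfl)]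

def demanded {F : Type*} [Field F] {N K B : ℕ} (d : Fin K → Fin N → F) (w : Fin N → Fin B → F) :
    Fin K → Fin B → F :=
  fun k b => ∑ n, d k n * w n b

namespace SPLFRScheme

variable {F : Type*} [Field F] [Fintype F] {N K B : ℕ} {M R : ℝ} (S : SPLFRScheme F N K B M R)

theorem exists_mem_support_enc_eq (d : Fin K → Fin N → F) (w w' : Fin N → Fin B → F)
    {p' : S.P} (hp' : p' ∈ S.prand.support) :
    ∃ p ∈ S.prand.support, S.enc p d w = S.enc p' d w' := by
  have hpos : S.prand.toOuterMeasure {p | S.enc p d w' = S.enc p' d w'} ≠ 0 := fun h =>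
    ((PMF.toOuterMeasure_apply_eq_zero_iff _ _).mp h).notMem_of_mem_left hp' rfl
  rw [← S.secure d w w', Ne, PMF.toOuterMeasure_apply_eq_zero_iff] at hpos
  exact Set.not_disjoint_iff.mp hpos

theorem demand_eq_of_enc_eq_of_cache_eq {p p' : S.P} (hp : p ∈ S.prand.support)
    (hp' : p' ∈ S.prand.support) {d : Fin K → Fin N → F} {w w' : Fin N → Fin B → F} {k : Fin K}
    (hx : S.enc p d w = S.enc p' d w') (hz : S.cache k p w = S.cache k p' w') :
    demanded d w k = demanded d w' k := by
  have hdec := S.correct p' hp' d w' k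
  rw [← hx, ← hz] at hdec
  exact (S.correct p hp d w k).symm.trans hdec

end SPLFRScheme

section CutSet

variable (F : Type*) [Field F] {N K : ℕ}

def cutSetDemand (u j : ℕ) : Fin K → Fin N → F :=
  fun k n => if (k : ℕ) < u ∧ (n : ℕ) = u * j + k then 1 else 0

theorem cutSetDemand_div_mod {u : ℕ} (n : Fin N) (k : Fin K) (hk : (k : ℕ) = n % u)
    (hu : 0 < u) : cutSetDemand F u (n / u) k = Pi.single n 1 := by
  funext m
  simp only [cutSetDemand, Pi.single_apply, hk, Nat.mod_lt _ hu, true_and, Nat.div_add_mod,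
    Fin.val_inj]

variable {F}

theorem SPLFRScheme.mul_le_cutSet [Fintype F] {B : ℕ} {M R : ℝ} (S : SPLFRScheme F N K B M R)
    {u : ℕ} (hu : 0 < u) (huK : u ≤ K) :
    N * B ≤ (N - 1) / u * ⌊R * (B : ℝ)⌋₊ + u * ⌊M * (B : ℝ)⌋₊ := by
  set t := (N - 1) / u
  obtain ⟨p₀, hp₀⟩ := S.prand.support_nonempty
  choose pw hpw hpwt using
    fun w => S.exists_mem_support_enc_eq (cutSetDemand F u t) w 0 hp₀
  let f (w : Fin N → Fin B → F) :
      (Fin t → Fin ⌊R * (B : ℝ)⌋₊ → F) × (Fin u → Fin ⌊M * (B : ℝ)⌋₊ → F) :=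
    (fun j => S.enc (pw w) (cutSetDemand F u j) w, fun k => S.cache (Fin.castLE huK k) (pw w) w)
  have hf : Injective f := by
    intro w w' hww'
    have henc : ∀ j ≤ t, S.enc (pw w) (cutSetDemand F u j) w =
        S.enc (pw w') (cutSetDemand F u j) w' := by
      intro j hj
      rcases hj.lt_or_eq with hj | rfl
      · exact congrFun (congrArg Prod.fst hww') ⟨j, hj⟩
      · rw [hpwt, hpwt]
    funext n b
    have hk : (n : ℕ) % u < u := Nat.mod_lt _ hu
    have hdemand := S.demand_eq_of_enc_eq_of_cache_eq (hpw w) (hpw w')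
      (henc _ (Nat.div_le_div_right (Nat.le_sub_one_of_lt n.2)))
      (congrFun (congrArg Prod.snd hww') ⟨n % u, hk⟩)
    unfold demanded at hdemand
    rw [cutSetDemand_div_mod F n (Fin.castLE huK ⟨n % u, hk⟩) rfl hu] at hdemand
    simpa [Pi.single_apply] using congrFun hdemand b
  have hcard := Fintype.card_le_of_injective f hf
  simp only [Fintype.card_fun, Fintype.card_prod, Fintype.card_fin, ← pow_mul, ← pow_add] at hcard
  rw [Nat.pow_le_pow_iff_right Fintype.one_lt_card] at hcard
  linarith

end CutSet

theorem div_le_of_mul_le_floor {N u B : ℕ} {M R : ℝ} (hN : 2 ≤ N) (hB : 1 ≤ B) (hR : 0 ≤ R)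
    (hM : 0 ≤ M) (h : N * B ≤ (N - 1) / u * ⌊R * (B : ℝ)⌋₊ + u * ⌊M * (B : ℝ)⌋₊) :
    ((u : ℝ) * N - (u : ℝ) ^ 2 * M) / ((N : ℝ) - 1) ≤ R := by
  set t := (N - 1) / u
  have hB : (0 : ℝ) < B := by exact_mod_cast hB
  have hfloor : (N : ℝ) * B ≤ t * (R * B) + u * (M * B) := calc
    (N : ℝ) * B ≤ t * ⌊R * (B : ℝ)⌋₊ + u * ⌊M * (B : ℝ)⌋₊ := by exact_mod_cast h
    _ ≤ t * (R * B) + u * (M * B) := by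
      gcongr
      · exact Nat.floor_le (by positivity)
      · exact Nat.floor_le (by positivity)
  have hNtu : (N : ℝ) ≤ t * R + u * M := by nlinarith
  have hut : (u : ℝ) * t ≤ N - 1 := by
    rw [← Nat.cast_pred (by omega)]
    exact_mod_cast Nat.mul_div_le (N - 1) u
  have hN1 : (0 : ℝ) < N - 1 := by
    have : (2 : ℝ) ≤ N := by exact_mod_cast hN
    linarith
  rw [div_le_iff₀ hN1]
  nlinarith [mul_le_mul_of_nonneg_left hNtu (Nat.cast_nonneg (α := ℝ) u),
    mul_le_mul_of_nonneg_right hut hR]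

noncomputable section OneTimePad

variable {F : Type*} [Field F] {N K B L L' : ℕ}

def otpEnc (ι : Fin K × Fin B → Fin L) (pad : Fin K → Fin B → F) (d : Fin K → Fin N → F)
    (w : Fin N → Fin B → F) : Fin L → F :=
  extend ι (uncurry (demanded d w + pad)) 0

def otpCache (ι' : Fin B → Fin L') (pad : Fin K → Fin B → F) (k : Fin K) : Fin L' → F :=
  extend ι' (pad k) 0

def otpDec (ι : Fin K × Fin B → Fin L) (ι' : Fin B → Fin L') (k : Fin K) (x : Fin L → F)
    (z : Fin L' → F) : Fin B → F :=
  fun b => x (ι (k, b)) - z (ι' b)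

theorem otpDec_otpEnc {ι : Fin K × Fin B → Fin L} {ι' : Fin B → Fin L'} (hι : Injective ι)
    (hι' : Injective ι') (pad : Fin K → Fin B → F) (d : Fin K → Fin N → F)
    (w : Fin N → Fin B → F) (k : Fin K) :
    otpDec ι ι' k (otpEnc ι pad d w) (otpCache ι' pad k) = demanded d w k := by
  funext b
  simp [otpDec, otpEnc, otpCache, hι.extend_apply, hι'.extend_apply]

/-- The key shift `pad ↦ pad + (demanded d w - demanded d' w')` is a bijection carrying one event
onto the other. -/
theorem otp_toOuterMeasure_eq {P : Type*} [Fintype P] [Nonempty P] (E : P ≃ (Fin K → Fin B → F))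
    (ι : Fin K × Fin B → Fin L) (ι' : Fin B → Fin L') (T : Finset (Fin K))
    {d d' : Fin K → Fin N → F} {w w' : Fin N → Fin B → F}
    (hT : ∀ k ∈ T, demanded d w k = demanded d' w' k) (x : Fin L → F) (z : Fin K → Fin L' → F) :
    (PMF.uniformOfFintype P).toOuterMeasure
        {p | otpEnc ι (E p) d w = x ∧ ∀ k ∈ T, otpCache ι' (E p) k = z k} =
      (PMF.uniformOfFintype P).toOuterMeasure
        {p | otpEnc ι (E p) d' w' = x ∧ ∀ k ∈ T, otpCache ι' (E p) k = z k} := by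
  set c := demanded d w - demanded d' w'
  rw [← PMF.toOuterMeasure_uniformOfFintype_preimage_equiv
    (E.trans ((Equiv.addRight c).trans E.symm)) {p | otpEnc ι (E p) d' w' = x ∧ _}]
  congr 1
  ext p
  have hc : ∀ k ∈ T, c k = 0 := fun k hk => by simp [c, hT k hk]
  have henc : otpEnc ι (E p + c) d' w' = otpEnc ι (E p) d w := by
    simp only [otpEnc, c]
    congr 2
    abel
  simp +contextual [otpCache, henc, hc]

end OneTimePad

noncomputable def oneTimePad (F : Type*) [Field F] [Fintype F] (N K B : ℕ) {M : ℝ} (hM : 1 ≤ M) :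
    SPLFRScheme F N K B M K :=
  haveI : NeZero (Fintype.card F) := ⟨Fintype.card_ne_zero⟩
  -- the randomness must live in `Type`, so key symbols are stored in `Fin (Fintype.card F)`
  let E : (Fin K → Fin B → Fin (Fintype.card F)) ≃ (Fin K → Fin B → F) :=
    Equiv.piCongrRight fun _ => Equiv.piCongrRight fun _ => (Fintype.equivFin F).symm
  have hKB : K * B = ⌊(K : ℝ) * B⌋₊ := by rw [← Nat.cast_mul, Nat.floor_natCast]
  have hMB : B ≤ ⌊M * B⌋₊ := Nat.le_floor (le_mul_of_one_le_left B.cast_nonneg hM)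
  let ι : Fin K × Fin B → Fin ⌊(K : ℝ) * B⌋₊ := Fin.cast hKB ∘ finProdFinEquiv
  have hι : Injective ι := (Fin.cast_injective hKB).comp finProdFinEquiv.injective
  { P := Fin K → Fin B → Fin (Fintype.card F)
    prand := PMF.uniformOfFintype _
    cache := fun k p _ => otpCache (Fin.castLE hMB) (E p) k
    enc := fun p d w => otpEnc ι (E p) d w
    dec := fun k x _ z => otpDec ι (Fin.castLE hMB) k x z
    correct := fun p _ d w k => otpDec_otpEnc hι (Fin.castLE_injective hMB) (E p) d w k
    secure := fun d w w' x => by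
      simpa using otp_toOuterMeasure_eq E ι (Fin.castLE hMB) ∅ (d := d) (d' := d) (w := w) (w' := w')
        (by simp) x 0
    privacy := fun T _ w d d' hdd' x z =>
      otp_toOuterMeasure_eq E ι (Fin.castLE hMB) T (d := d) (d' := d') (w := w) (w' := w)
        (fun k hk => by unfold demanded; rw [hdd' k hk]) x z }

theorem le_Rstar {F : Type*} [Field F] [Fintype F] {N K : ℕ} {M c : ℝ} (hM : 1 ≤ M)
    (h : ∀ B ≥ 1, ∀ R, 0 ≤ R → SPLFRScheme F N K B M R → c ≤ R) : c ≤ Rstar F N K M := by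
  have hK : ∀ B, (K : ℝ) ∈ {R : ℝ | 0 ≤ R ∧ Nonempty (SPLFRScheme F N K B M R)} :=
    fun B => ⟨K.cast_nonneg, ⟨oneTimePad F N K B hM⟩⟩
  apply Filter.le_liminf_of_le
  · refine Filter.isCoboundedUnder_ge_of_eventually_le (x := (K : ℝ)) _ (.of_forall fun B => ?_)
    exact csInf_le ⟨0, fun R hR => hR.1⟩ (hK B)
  · filter_upwards [Filter.eventually_ge_atTop 1] with B hB
    exact le_csInf ⟨K, hK B⟩ fun R ⟨hR, ⟨S⟩⟩ => h B hB R hR S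

theorem stmt9_general (F : Type*) [Field F] [Fintype F] (N K : ℕ)
    (hN : 2 ≤ N)
    (M : ℝ) (hM1 : 1 ≤ M)
    (u : ℕ) (hu1 : 1 ≤ u) (hu : u ≤ min (N / 2) K) :
    ((u : ℝ) * N - (u : ℝ) ^ 2 * M) / ((N : ℝ) - 1) ≤ Rstar F N K M :=
  le_Rstar hM1 fun _ hB _ hR S => div_le_of_mul_le_floor hN hB hR (by linarith)
    (S.mul_le_cutSet hu1 (hu.trans (min_le_right _ _)))

/-- cut-set bound: in an `(N,K)` SP-LFR system with `N ≥ 2`,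
for every integer `u` with `1 ≤ u ≤ min(⌊N/2⌋, K)`, the optimal load
satisfies `R*(M) ≥ (uN - u²M)/(N-1)` for all `M ∈ [1,N]`. -/
theorem stmt9 (F : Type*) [Field F] [Fintype F] (N K : ℕ)
    (hN : 2 ≤ N) (hK : 1 ≤ K)
    (M : ℝ) (hM1 : 1 ≤ M) (hMN : M ≤ (N : ℝ))
    (u : ℕ) (hu1 : 1 ≤ u) (hu : u ≤ min (N / 2) K) :
    ((u : ℝ) * N - (u : ℝ) ^ 2 * M) / ((N : ℝ) - 1) ≤ Rstar F N K M :=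
  stmt9_general F N K hN M hM1 u hu1 hu
end

section
/- Let N ≥ 2, K ≥ 1 be integers and let R_MAN : [1,N] → ℝ be the lower convex envelope of the points (M_t, R_t) = (1 + t(N−1)/K, (K−t)/(t+1)), t ∈ [0:K]. Then R_MAN(M) ≤ (N−M)/(M−1) for all M ∈ (1, N]. -/
open scoped BigOperators

/-- The lower convex envelope of finitely many points `pts i = (x_i, y_i)`,
evaluated at `x`: the infimum of the values of convex combinations of the
points whose first coordinate equals `x`. -/
noncomputable def lowerConvexEnvelope {m : ℕ} (pts : Fin m → ℝ × ℝ)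
    (x : ℝ) : ℝ :=
  sInf {y : ℝ | ∃ lam : Fin m → ℝ, (∀ i, 0 ≤ lam i) ∧ (∑ i, lam i) = 1 ∧
    (∑ i, lam i * (pts i).1) = x ∧ (∑ i, lam i * (pts i).2) = y}

/-! In the coordinate `s = (M - 1)K/(N - 1)` the MAN points are `(t, (K - t)/(t + 1))` and the
bound `(N - M)/(M - 1)` is `(K - s)/s`. Writing `M` as a convex combination of the two
neighbouring points `M_u`, `M_{u+1}` with `u < s ≤ u + 1`, the envelope at `M` is at most the
chord value there, and that chord lies below the curve `(K - s)/s`. -/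

section LowerConvexEnvelope

variable {m : ℕ} (pts : Fin m → ℝ × ℝ)

lemma bddBelow_convexCombinations (x : ℝ) :
    BddBelow {y : ℝ | ∃ lam : Fin m → ℝ, (∀ i, 0 ≤ lam i) ∧ (∑ i, lam i) = 1 ∧
      (∑ i, lam i * (pts i).1) = x ∧ (∑ i, lam i * (pts i).2) = y} := by
  -- unlike `min y_j`, this bound needs no nonemptiness of `Fin m`
  refine ⟨-∑ j, |(pts j).2|, ?_⟩
  rintro y ⟨lam, hlam, hsum, -, rfl⟩
  have hle : ∀ i, -∑ j, |(pts j).2| ≤ (pts i).2 := fun i =>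
    (neg_le_neg (Finset.single_le_sum (fun j _ => abs_nonneg (pts j).2)
      (Finset.mem_univ i))).trans (neg_abs_le _)
  calc -∑ j, |(pts j).2| = ∑ i, lam i * -∑ j, |(pts j).2| := by
        rw [← Finset.sum_mul, hsum, one_mul]
    _ ≤ ∑ i, lam i * (pts i).2 :=
        Finset.sum_le_sum fun i _ => mul_le_mul_of_nonneg_left (hle i) (hlam i)

lemma lowerConvexEnvelope_le_of_convexCombination (lam : Fin m → ℝ) (hlam : ∀ i, 0 ≤ lam i)
    (hsum : ∑ i, lam i = 1) :
    lowerConvexEnvelope pts (∑ i, lam i * (pts i).1) ≤ ∑ i, lam i * (pts i).2 :=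
  csInf_le (bddBelow_convexCombinations pts _) ⟨lam, hlam, hsum, rfl, rfl⟩

lemma lowerConvexEnvelope_le_segment (i j : Fin m) {a b : ℝ} (ha : 0 ≤ a) (hb : 0 ≤ b)
    (hab : a + b = 1) :
    lowerConvexEnvelope pts (a * (pts i).1 + b * (pts j).1) ≤
      a * (pts i).2 + b * (pts j).2 := by
  set lam : Fin m → ℝ := fun k => (if k = i then a else 0) + (if k = j then b else 0)
  have hlam : ∀ f : Fin m → ℝ, ∑ k, lam k * f k = a * f i + b * f j := fun f => by
    simp [lam, add_mul, Finset.sum_add_distrib, ite_mul]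
  have key := lowerConvexEnvelope_le_of_convexCombination pts lam
    (fun k => by simp only [lam]; split_ifs <;> linarith)
    (by simpa [hab] using hlam fun _ => 1)
  rwa [hlam, hlam] at key

end LowerConvexEnvelope

lemma chord_le_div_self (k u s : ℝ) (hu : 0 ≤ u) (huk : u + 1 ≤ k) (hs : 0 < s) :
    (u + 1 - s) * ((k - u) / (u + 1)) + (s - u) * ((k - (u + 1)) / (u + 1 + 1)) ≤
      (k - s) / s := by
  have hgap : (k - s) / s - ((u + 1 - s) * ((k - u) / (u + 1)) +
      (s - u) * ((k - (u + 1)) / (u + 1 + 1))) =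
      ((k - (u + 1)) * (u + 1) + (k + 1) * (u + 1 - s) ^ 2) / ((u + 1) * (u + 2) * s) := by
    field_simp
    ring
  have : 0 ≤ ((k - (u + 1)) * (u + 1) + (k + 1) * (u + 1 - s) ^ 2) /
      ((u + 1) * (u + 2) * s) := by
    apply div_nonneg _ (by positivity)
    exact add_nonneg (mul_nonneg (by linarith) (by linarith))
      (mul_nonneg (by linarith) (sq_nonneg _))
  linarith

theorem stmt10_general (N K : ℕ) (hK : 1 ≤ K)
    (M : ℝ) (hM1 : 1 < M) (hMN : M ≤ (N : ℝ)) :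
    lowerConvexEnvelope
      (fun t : Fin (K + 1) =>
        (1 + (t : ℝ) * ((N : ℝ) - 1) / K, ((K : ℝ) - t) / (t + 1))) M
      ≤ ((N : ℝ) - M) / (M - 1) := by
  have hN : (0 : ℝ) < N - 1 := by linarith
  have hK0 : (0 : ℝ) < K := by exact_mod_cast hK
  set s : ℝ := (M - 1) * K / (N - 1) with hs
  have hs0 : 0 < s := by positivity
  have hM : M = 1 + s * (N - 1) / K := by rw [hs]; field_simp; ring
  obtain ⟨u, hu⟩ : ∃ u : ℕ, ⌈s⌉₊ = u + 1 := Nat.exists_eq_add_of_le' (Nat.ceil_pos.2 hs0)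
  have hsK : s ≤ K := by rw [hs, div_le_iff₀ hN]; nlinarith
  have huK : u + 1 ≤ K := hu ▸ Nat.ceil_le.2 hsK
  have hus : (u : ℝ) < s := by
    have := Nat.ceil_lt_add_one hs0.le; rw [hu] at this; push_cast at this; linarith
  have hsu : s ≤ u + 1 := by exact_mod_cast hu ▸ Nat.le_ceil s
  have hMcomb : M = (u + 1 - s) * (1 + (u : ℝ) * (N - 1) / K) +
      (s - u) * (1 + ((u + 1 : ℕ) : ℝ) * (N - 1) / K) := by
    rw [hM]; push_cast; field_simp; ring
  have hbound : ((N : ℝ) - M) / (M - 1) = (K - s) / s := by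
    rw [hM]; field_simp; ring
  rw [hbound, hMcomb]
  calc _ ≤ _ := lowerConvexEnvelope_le_segment _ ⟨u, by omega⟩ ⟨u + 1, by omega⟩
        (by linarith) (by linarith) (by ring)
    _ = (u + 1 - s) * ((K - u) / (u + 1)) + (s - u) * ((K - (u + 1)) / (u + 1 + 1)) := by
        push_cast; rfl
    _ ≤ (K - s) / s := chord_le_div_self K u s u.cast_nonneg (by exact_mod_cast huK) hs0

/-- for integers `N ≥ 2`, `K ≥ 1`, the lower convex envelope
`R_MAN` of the MAN points `(M_t, R_t) = (1 + t(N-1)/K, (K-t)/(t+1))`,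
`t ∈ [0:K]`, satisfies `R_MAN(M) ≤ (N-M)/(M-1)` on `(1, N]`. -/
theorem stmt10 (N K : ℕ) (hN : 2 ≤ N) (hK : 1 ≤ K)
    (M : ℝ) (hM1 : 1 < M) (hMN : M ≤ (N : ℝ)) :
    lowerConvexEnvelope
      (fun t : Fin (K + 1) =>
        (1 + (t : ℝ) * ((N : ℝ) - 1) / K, ((K : ℝ) - t) / (t + 1))) M
      ≤ ((N : ℝ) - M) / (M - 1) :=
  stmt10_general N K hK M hM1 hMN
end

section
/- Let N ≥ K ≥ 2 be integers, t ∈ [1:K], and θ_t = (K−t)/(N−1) ∈ [0,1]. Then tN/K = θ_t(1 + (t−1)(N−1)/K) + (1−θ_t)(1 + t(N−1)/K), and (θ_t·(K−t+1)/t + (1−θ_t)·(K−t)/(t+1)) / ((K−t)/(t+1)) = 1 + (K+1)/((N−1)t), which is at most 1 + (K+1)/(N−1), and hence at most 2 if N ≥ K+2, at most 2.5 if N = K+1, and at most 3 if N = K ≥ 3 (when K−t > 0; the ratio bound requires t ≥ 1 and K−t ≥ 1). -/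
/-!
Memory sharing between the corner points `t - 1` and `t` with weight `θ = (K - t)/(N - 1)` lowers
the memory by `θ (N - 1)/K = (K - t)/K` below `M_t`, which lands exactly at `tN/K`. The load
rises by `θ (R_{t-1} - R_t) = θ (K + 1)/(t (t + 1))`; relative to `R_t` the factor `K - t`
cancels against `θ`, leaving `1 + (K + 1)/((N - 1) t)`, which decreases in `t` and `N`.
-/

/-- Memory `M_s` of the `s`-th MAN SP-LFR corner point. -/
noncomputable def cornerMemory (N K s : ℝ) : ℝ := 1 + s * (N - 1) / K

/-- Load `R_s` of the `s`-th MAN SP-LFR corner point, and also the non-secure MAN load at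
memory `sN/K`. -/
noncomputable def cornerLoad (K s : ℝ) : ℝ := (K - s) / (s + 1)

section CornerPoints

variable {N K t : ℝ}

theorem cornerMemory_sub_one (s : ℝ) :
    cornerMemory N K (s - 1) = cornerMemory N K s - (N - 1) / K := by
  unfold cornerMemory
  ring

theorem cornerLoad_sub_one_sub_cornerLoad (ht : t ≠ 0) (ht' : t + 1 ≠ 0) :
    cornerLoad K (t - 1) - cornerLoad K t = (K + 1) / (t * (t + 1)) := by
  unfold cornerLoad
  rw [sub_add_cancel]
  field_simp
  ring

theorem mul_div_eq_memorySharing (hK : K ≠ 0) (hN : N - 1 ≠ 0) :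
    t * N / K = (K - t) / (N - 1) * cornerMemory N K (t - 1) +
      (1 - (K - t) / (N - 1)) * cornerMemory N K t := by
  rw [cornerMemory_sub_one]
  unfold cornerMemory
  field_simp
  ring

theorem memorySharing_load_div_cornerLoad (hN : N - 1 ≠ 0) (ht : t ≠ 0) (ht' : t + 1 ≠ 0)
    (htK : K - t ≠ 0) :
    ((K - t) / (N - 1) * cornerLoad K (t - 1) + (1 - (K - t) / (N - 1)) * cornerLoad K t) /
        cornerLoad K t = 1 + (K + 1) / ((N - 1) * t) := by
  have hR : cornerLoad K t ≠ 0 := div_ne_zero htK ht'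
  have hsplit : cornerLoad K (t - 1) =
      cornerLoad K t + (K + 1) / (t * (t + 1)) := by
    rw [← cornerLoad_sub_one_sub_cornerLoad ht ht', add_sub_cancel]
  rw [hsplit]
  unfold cornerLoad at hR ⊢
  field_simp
  ring

theorem one_add_div_mul_le_one_add_div (hK : 0 ≤ K + 1) (hN : 0 < N - 1) (ht : 1 ≤ t) :
    1 + (K + 1) / ((N - 1) * t) ≤ 1 + (K + 1) / (N - 1) := by
  gcongr
  exact le_mul_of_one_le_right hN.le ht

end CornerPoints

section Bounds

variable {N K : ℝ}

theorem one_add_div_le_two_of_add_two_le (hK : 0 < K + 1) (hKN : K + 2 ≤ N) :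
    1 + (K + 1) / (N - 1) ≤ 2 := by
  have : (K + 1) / (N - 1) ≤ 1 := by
    rw [div_le_one (by linarith)]
    linarith
  linarith

theorem one_add_div_le_five_halves_of_eq_add_one (hK : 2 ≤ K) (hN : N = K + 1) :
    1 + (K + 1) / (N - 1) ≤ 2.5 := by
  have : (K + 1) / (N - 1) ≤ 1.5 := by
    rw [div_le_iff₀ (by linarith)]
    linarith
  linarith

theorem one_add_div_le_three_of_eq (hK : 3 ≤ K) (hN : N = K) : 1 + (K + 1) / (N - 1) ≤ 3 := by
  have : (K + 1) / (N - 1) ≤ 2 := by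
    rw [div_le_iff₀ (by linarith)]
    linarith
  linarith

end Bounds

/-- for integers `N ≥ K ≥ 2`, `t ∈ [1:K]` and
`θ_t = (K-t)/(N-1)`, we have `θ_t ∈ [0,1]`, the convex-combination identity
`tN/K = θ_t·M_{t-1} + (1-θ_t)·M_t` with `M_s = 1 + s(N-1)/K`, and (when
`K - t ≥ 1`) the ratio
`(θ_t·R_{t-1} + (1-θ_t)·R_t) / R'_t = 1 + (K+1)/((N-1)t)` with
`R_s = (K-s)/(s+1)` and `R'_t = (K-t)/(t+1)`, which is at most
`1 + (K+1)/(N-1)`, hence at most `2` if `N ≥ K+2`, at most `2.5` if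
`N = K+1`, and at most `3` if `N = K ≥ 3`. -/
theorem stmt17 (N K t : ℕ) (hK : 2 ≤ K) (hNK : K ≤ N)
    (ht1 : 1 ≤ t) (htK : t ≤ K)
    (θ : ℝ) (hθ : θ = ((K : ℝ) - t) / ((N : ℝ) - 1)) :
    (0 ≤ θ ∧ θ ≤ 1) ∧
    ((t : ℝ) * N / K =
      θ * (1 + ((t : ℝ) - 1) * ((N : ℝ) - 1) / K) +
      (1 - θ) * (1 + (t : ℝ) * ((N : ℝ) - 1) / K)) ∧
    (t < K →
      ((θ * (((K : ℝ) - ((t : ℝ) - 1)) / (((t : ℝ) - 1) + 1)) +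
          (1 - θ) * (((K : ℝ) - t) / ((t : ℝ) + 1))) /
        (((K : ℝ) - t) / ((t : ℝ) + 1))
        = 1 + ((K : ℝ) + 1) / (((N : ℝ) - 1) * t)) ∧
      (1 + ((K : ℝ) + 1) / (((N : ℝ) - 1) * t) ≤
        1 + ((K : ℝ) + 1) / ((N : ℝ) - 1)) ∧
      (K + 2 ≤ N → 1 + ((K : ℝ) + 1) / (((N : ℝ) - 1) * t) ≤ 2) ∧
      (N = K + 1 → 1 + ((K : ℝ) + 1) / (((N : ℝ) - 1) * t) ≤ 2.5) ∧
      (N = K → 3 ≤ K → 1 + ((K : ℝ) + 1) / (((N : ℝ) - 1) * t) ≤ 3)) := by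
  subst hθ
  have hKR : (2 : ℝ) ≤ K := by exact_mod_cast hK
  have hNKR : (K : ℝ) ≤ N := by exact_mod_cast hNK
  have htR : (1 : ℝ) ≤ t := by exact_mod_cast ht1
  have htKR : (t : ℝ) ≤ K := by exact_mod_cast htK
  have hN : (0 : ℝ) < N - 1 := by linarith
  refine ⟨⟨div_nonneg (by linarith) hN.le, (div_le_one hN).2 (by linarith)⟩,
    mul_div_eq_memorySharing (by positivity) hN.ne', fun hlt => ?_⟩
  have hltR : (t : ℝ) < K := by exact_mod_cast hlt
  have hmono := one_add_div_mul_le_one_add_div (K := K) (by linarith) hN htR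
  exact ⟨memorySharing_load_div_cornerLoad hN.ne' (by positivity) (by positivity) (by linarith),
    hmono,
    fun hN2 => hmono.trans (one_add_div_le_two_of_add_two_le (by linarith) (by exact_mod_cast hN2)),
    fun hN1 => hmono.trans (one_add_div_le_five_halves_of_eq_add_one hKR (by exact_mod_cast hN1)),
    fun hN hK3 => hmono.trans (one_add_div_le_three_of_eq (by exact_mod_cast hK3)
      (by exact_mod_cast hN))⟩
end
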